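/- Let f : ℝ^d → ℝ^C be a classifier decomposed as f = f_head ∘ f_enc with encoder f_enc : ℝ^d → ℝ^{d'} and head f_head : ℝ^{d'} → ℝ^C, let rep : Concepts → (ℝ^d → ℝ) and r̂ep : Concepts → (ℝ^{d'} → ℝ) satisfy rep(con)(v) = r̂ep(con)(f_enc(v)) for every concept con and every v ∈ ℝ^d, let B ⊆ ℝ^d, and let e be a Con_spec specification. If (f_head, r̂ep, f_enc(B)) ⊨ e, where f_enc(B) is the image of B under f_enc, then (f, rep, B) ⊨ e. -/
import Mathlib


/-- Syntax of the Con_spec specification language over concept names `Concepts`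
and classes `C`. -/
inductive ConSpec (Concepts C : Type*) where
  | gt : Concepts → Concepts → ConSpec Concepts C
  | predict : C → ConSpec Concepts C
  | not : ConSpec Concepts C → ConSpec Concepts C
  | and : ConSpec Concepts C → ConSpec Concepts C → ConSpec Concepts C
  | or : ConSpec Concepts C → ConSpec Concepts C → ConSpec Concepts C

/-- Semantics of a Con_spec expression relative to a classifier `f : X → (C → ℝ)`,
an input `v : X`, and a concept representation map `rep : Concepts → X → ℝ`. -/
def ConSpec.sem {Concepts C X : Type*} :
    ConSpec Concepts C → (X → (C → ℝ)) → X → (Concepts → X → ℝ) → Prop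
  | .gt con1 con2, _, v, rep => rep con1 v > rep con2 v
  | .predict c, f, v, _ => {c' | ∀ c'', f v c'' ≤ f v c'} = {c}
  | .not e, f, v, rep => ¬ e.sem f v rep
  | .and e1 e2, f, v, rep => e1.sem f v rep ∧ e2.sem f v rep
  | .or e1 e2, f, v, rep => e1.sem f v rep ∨ e2.sem f v rep

/-- `(f, rep, B) ⊨ e` : the classifier `f` satisfies the specification `e`
with respect to concept representation map `rep` and input scope `B`. -/
def ConSpec.satisfies {Concepts C X : Type*} (f : X → (C → ℝ))
    (rep : Concepts → X → ℝ) (B : Set X) (e : ConSpec Concepts C) : Prop :=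
  ∀ x ∈ B, e.sem f x rep

theorem conspec_verif_head_mpr {d d' : ℕ} {Concepts C : Type*} [Fintype C]
    (f : (Fin d → ℝ) → (C → ℝ))
    (fenc : (Fin d → ℝ) → (Fin d' → ℝ)) (fhead : (Fin d' → ℝ) → (C → ℝ))
    (hf : f = fhead ∘ fenc)
    (rep : Concepts → (Fin d → ℝ) → ℝ) (rhat : Concepts → (Fin d' → ℝ) → ℝ)
    (hrep : ∀ (con : Concepts) (v : Fin d → ℝ), rep con v = rhat con (fenc v))
    (B : Set (Fin d → ℝ)) (e : ConSpec Concepts C)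
    (h : ConSpec.satisfies fhead rhat (fenc '' B) e) :
    ConSpec.satisfies f rep B e := by
  subst hf
  have key : ∀ (e : ConSpec Concepts C) (x : Fin d → ℝ),
      e.sem fhead (fenc x) rhat ↔ e.sem (fhead ∘ fenc) x rep := by
    intro e
    induction e with
    | gt c1 c2 => intro x; simp [ConSpec.sem, hrep]
    | predict c => intro x; simp [ConSpec.sem, Function.comp]
    | not e ih => intro x; simp [ConSpec.sem, ih x]
    | and e1 e2 ih1 ih2 => intro x; simp [ConSpec.sem, ih1 x, ih2 x]
    | or e1 e2 ih1 ih2 => intro x; simp [ConSpec.sem, ih1 x, ih2 x]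
  intro x hx
  exact (key e x).mp (h _ ⟨x, hx, rfl⟩)
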